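/- Let G be a simple graph on n ≥ 3 vertices such that deg_G(u) + deg_G(v) ≥ n for every pair of distinct nonadjacent vertices u, v. Then either G − e is hamiltonian for every edge e of G (G is 1-edge-fault hamiltonian), or G is isomorphic to K₃, or the vertex set of G can be partitioned into {a, b} ∪ S ∪ T with |S| = s ∈ {1, 2}, |T| = t ≥ 1, s + t = n − 2, such that S induces a complete graph, T induces a complete graph, there are no edges between S and T, and both a and b are adjacent to every vertex of S ∪ T (a and b may or may not be adjacent to each other). -/

import Mathlib

open SimpleGraph

set_option linter.unusedVariables false

/-- The degree of a vertex: the number of its neighbors. -/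
noncomputable def deg {α : Type*} (G : SimpleGraph α) (v : α) : ℕ :=
  (G.neighborSet v).ncard

/-- The join of two (disjoint) graphs: both graphs together with all cross edges. -/
def gJoin {α β : Type*} (G : SimpleGraph α) (H : SimpleGraph β) : SimpleGraph (α ⊕ β) where
  Adj u v := match u, v with
    | Sum.inl a, Sum.inl b => G.Adj a b
    | Sum.inr a, Sum.inr b => H.Adj a b
    | _, _ => True
  symm := by
    constructor
    rintro (a | a) (b | b) h
    · exact G.adj_symm h
    · trivial
    · trivial
    · exact H.adj_symm h
  loopless := by
    constructor
    rintro (a | a) h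
    · exact G.loopless.irrefl a h
    · exact H.loopless.irrefl a h

/-- `kK2 k` : the disjoint union of `k` copies of `K₂`. -/
def kK2 (k : ℕ) : SimpleGraph (Fin k × Fin 2) where
  Adj p q := p.1 = q.1 ∧ p.2 ≠ q.2
  symm := ⟨fun p q h => ⟨h.1.symm, h.2.symm⟩⟩
  loopless := ⟨fun p h => h.2 rfl⟩

/-- `G − F`: the subgraph of `G` induced on the complement of the vertex set `F`. -/
def delVerts {W : Type*} [Fintype W] [DecidableEq W] (G : SimpleGraph W) (F : Finset W) :
    SimpleGraph ((Fᶜ : Finset W) : Set W) :=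
  G.induce ((Fᶜ : Finset W) : Set W)

/-!
By Ore's theorem `G` is hamiltonian. If `G - xy` is not, every hamiltonian cycle of `G` uses
`xy`, so `G - xy` has a hamiltonian path `x a ⋯ b y`. Ore's condition survives in `G - xy` for
pairs avoiding `x` and `y`, so by Ore's crossing argument no hamiltonian path of `G - xy` has both
ends outside `{x, y}`. Pósa rotations turn this into control of the neighbourhoods: either
`N(y) = {x, b}`, or `N(x) = {y, a}`, or `N(x) = {y, a, b}` and `N(y) = {x, a, b}`. In each case a
set `S` of one or two vertices is cut off from the rest by a pair of vertices, and Ore's condition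
makes the remaining vertices a clique joined to that pair. For `n = 3` Ore's condition already
forces `G = K₃`.
-/

namespace List

variable {α : Type*}

theorem exists_mem_of_length_lt_countP_add {p q : α → Bool} :
    ∀ {l : List α}, l.length < l.countP p + l.countP q → ∃ a ∈ l, p a ∧ q a
  | [] => by simp
  | a :: l => by
    intro h
    by_cases hpq : p a ∧ q a
    · exact ⟨a, mem_cons_self, hpq⟩
    · have : l.length < l.countP p + l.countP q := by
        simp only [countP_cons, length_cons] at h
        split_ifs at h <;> simp_all <;> omega
      obtain ⟨b, hb, hpqb⟩ := exists_mem_of_length_lt_countP_add this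
      exact ⟨b, mem_cons_of_mem a hb, hpqb⟩

theorem exists_eq_append_cons_cons_of_mem_zip {a b : α} :
    ∀ {l : List α}, (a, b) ∈ l.dropLast.zip l.tail → ∃ s t, l = s ++ a :: b :: t
  | [] | [_] => by simp
  | c :: d :: l => by
    intro h
    rw [dropLast_cons_cons, tail_cons, zip_cons_cons, mem_cons] at h
    rcases h with h | h
    · obtain ⟨rfl, rfl⟩ := Prod.mk.inj h
      exact ⟨[], l, rfl⟩
    · obtain ⟨s, t, hst⟩ := exists_eq_append_cons_cons_of_mem_zip (l := d :: l) h
      exact ⟨c :: s, t, by rw [hst, cons_append]⟩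

theorem Nodup.eq_of_append_cons_cons {l s₁ s₂ t₁ t₂ : List α} {a b₁ b₂ : α} (hl : l.Nodup)
    (h₁ : l = s₁ ++ a :: b₁ :: t₁) (h₂ : l = s₂ ++ a :: b₂ :: t₂) : b₁ = b₂ := by
  classical
  have hlen : ∀ {s t}, l = s ++ a :: t → s.length = l.idxOf a := by
    rintro s t rfl
    have ha : a ∉ s := fun has => (nodup_cons.1 (nodup_middle.1 hl)).1 (mem_append_left _ has)
    rw [idxOf_append_of_notMem ha, idxOf_cons_self, add_zero]
  have := (append_inj (h₁.symm.trans h₂) ((hlen h₁).trans (hlen h₂).symm)).2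
  simp_all

theorem exists_eq_cons_cons {l : List α} {x : α} (hl : 2 ≤ l.length) (hx : l.head? = some x) :
    ∃ a r, l = x :: a :: r := by
  match l, hl with
  | x' :: a :: r, _ => exact ⟨a, r, by simp_all⟩

theorem Nodup.ne_of_head?_of_getLast? {l : List α} {u w : α} (hl : l.Nodup) (h2 : 2 ≤ l.length)
    (hu : l.head? = some u) (hw : l.getLast? = some w) : u ≠ w := by
  obtain ⟨a, r, rfl⟩ := exists_eq_cons_cons h2 hu
  rw [getLast?_cons_cons, getLast?_eq_some_getLast (cons_ne_nil a r), Option.some.injEq] at hw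
  rintro rfl
  exact (nodup_cons.1 hl).1 (hw ▸ getLast_mem (cons_ne_nil a r))

theorem exists_eq_cons_cons_append_pair {l : List α} {x y : α} (hl : 4 ≤ l.length)
    (hx : l.head? = some x) (hy : l.getLast? = some y) : ∃ a b m, l = x :: a :: m ++ [b, y] := by
  obtain ⟨a, r, rfl⟩ := exists_eq_cons_cons (by omega) hx
  obtain ⟨r', y', rfl⟩ := r.eq_nil_or_concat.resolve_left (by rintro rfl; simp at hl)
  obtain ⟨m, b, rfl⟩ := r'.eq_nil_or_concat.resolve_left (by rintro rfl; simp at hl)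
  simp only [concat_eq_append] at hy ⊢
  rw [← cons_append, ← cons_append, getLast?_concat, Option.some.injEq] at hy
  exact ⟨a, b, m, by simp [hy]⟩

end List

namespace SimpleGraph

variable {V : Type*} {G G' : SimpleGraph V} {u v w x y a b : V} {l l' s t : List V}

theorem Adj.deleteEdges_of_ne (h : G.Adj u v) (hx : u ≠ x) (hy : u ≠ y) :
    (G.deleteEdges {s(x, y)}).Adj u v := by
  simp [deleteEdges_adj, h, hx, hy]

theorem isChain_deleteEdges_of_notMem (hl : l.IsChain G.Adj) (hx : x ∉ l) :
    l.IsChain (G.deleteEdges {s(x, y)}).Adj :=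
  hl.imp_of_mem_imp fun p q hp hq hpq => deleteEdges_adj.2 ⟨hpq, by
    rw [Set.mem_singleton_iff, Sym2.eq_iff]
    rintro (⟨rfl, -⟩ | ⟨-, rfl⟩)
    exacts [hx hp, hx hq]⟩

theorem sup_edge_deleteEdges (h : ¬G.Adj u v) : (G ⊔ edge u v).deleteEdges {s(u, v)} = G := by
  ext a b
  simp only [deleteEdges_adj, sup_adj, edge_adj, Set.mem_singleton_iff, Sym2.eq_iff]
  constructor
  · rintro ⟨hab | ⟨hab, -⟩, hne⟩
    · exact hab
    · exact absurd hab hne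
  · intro hab
    refine ⟨Or.inl hab, ?_⟩
    rintro (⟨rfl, rfl⟩ | ⟨rfl, rfl⟩)
    exacts [h hab, h hab.symm]

theorem deg_mono [Finite V] (hle : G ≤ G') (v : V) : deg G v ≤ deg G' v :=
  Set.ncard_le_ncard (neighborSet_mono hle v)

theorem deg_deleteEdges_of_ne (hx : v ≠ x) (hy : v ≠ y) :
    deg (G.deleteEdges {s(x, y)}) v = deg G v := by
  unfold deg
  congr 1
  ext z
  exact ⟨fun h => (G.deleteEdges_le _) h, fun h => h.deleteEdges_of_ne hx hy⟩

theorem countP_adj_eq_deg [DecidableRel G.Adj] {L : List V} (hL : L.Nodup)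
    (hN : ∀ v, G.Adj u v → v ∈ L) : L.countP (G.Adj u ·) = deg G u := by
  classical
  rw [List.countP_eq_length_filter, ← List.toFinset_card_of_nodup (hL.filter _), deg,
    ← Set.ncard_coe_finset]
  congr 1
  ext v
  simpa using fun h => hN v h

section Saturation

variable [Fintype V] [DecidableEq V] {F : Finset V}

theorem neighborSet_subset_compl_insert (hF : ∀ f ∈ F, ¬G.Adj v f) :
    G.neighborSet v ⊆ ↑(insert v F)ᶜ := by
  intro z hz
  simp only [Finset.coe_compl, Finset.coe_insert, Set.mem_compl_iff, Set.mem_insert_iff,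
    Finset.mem_coe, not_or]
  exact ⟨(G.ne_of_adj hz).symm, fun hzF => hF z hzF hz⟩

theorem deg_add_card_le (hv : v ∉ F) (hF : ∀ f ∈ F, ¬G.Adj v f) :
    deg G v + F.card + 1 ≤ Fintype.card V := by
  have h₁ := Set.ncard_le_ncard (neighborSet_subset_compl_insert hF)
  rw [Set.ncard_coe_finset, Finset.card_compl, Finset.card_insert_of_notMem hv] at h₁
  have h₂ := Finset.card_le_univ (insert v F)
  rw [Finset.card_insert_of_notMem hv] at h₂
  unfold deg
  omega

theorem adj_of_card_le_deg_add (hv : v ∉ F) (hF : ∀ f ∈ F, ¬G.Adj v f)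
    (hdeg : Fintype.card V ≤ deg G v + F.card + 1) {z : V} (hzv : z ≠ v) (hzF : z ∉ F) :
    G.Adj v z := by
  have hN : G.neighborSet v = ↑(insert v F)ᶜ := by
    refine Set.eq_of_subset_of_ncard_le (neighborSet_subset_compl_insert hF) ?_ (Set.toFinite _)
    rw [Set.ncard_coe_finset, Finset.card_compl, Finset.card_insert_of_notMem hv]
    unfold deg at hdeg
    omega
  have hz : z ∈ (↑(insert v F)ᶜ : Set V) := by simp [hzv, hzF]
  rwa [← hN] at hz

end Saturation

/-- Hamiltonian paths are kept as vertex lists, so that rotations become list surgery. -/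
structure IsHamPath (G : SimpleGraph V) (u w : V) (l : List V) : Prop where
  isChain : l.IsChain G.Adj
  head?_eq : l.head? = some u
  getLast?_eq : l.getLast? = some w
  nodup : l.Nodup
  mem (v : V) : v ∈ l

namespace IsHamPath

theorem of_perm (h : G.IsHamPath u w l) (hl : l'.Perm l) (hc : l'.IsChain G'.Adj)
    (hu : l'.head? = some a) (hw : l'.getLast? = some b) : G'.IsHamPath a b l' where
  isChain := hc
  head?_eq := hu
  getLast?_eq := hw
  nodup := hl.nodup_iff.2 h.nodup
  mem v := hl.mem_iff.2 (h.mem v)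

theorem reverse (h : G.IsHamPath u w l) : G.IsHamPath w u l.reverse :=
  h.of_perm l.reverse_perm (List.isChain_reverse.2 (h.isChain.imp fun _ _ h => h.symm))
    (by rw [List.head?_reverse, h.getLast?_eq]) (by rw [List.getLast?_reverse, h.head?_eq])

theorem rotate (h : G.IsHamPath u w (s ++ a :: t)) (haw : G.Adj a w) (hb : t.head? = some b) :
    G.IsHamPath u b (s ++ a :: t.reverse) := by
  have ht : t ≠ [] := by rintro rfl; simp at hb
  have hsplit : ∀ r : List V, s ++ a :: r = (s ++ [a]) ++ r := by simp
  have hc := h.isChain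
  rw [hsplit, List.isChain_append] at hc
  have hw : t.getLast? = some w := by
    rw [← h.getLast?_eq, hsplit, List.getLast?_append_of_ne_nil _ ht]
  refine h.of_perm ((t.reverse_perm.cons a).append_left s) ?_ ?_ ?_
  · rw [hsplit, List.isChain_append]
    refine ⟨hc.1, List.isChain_reverse.2 (hc.2.1.imp fun _ _ h => h.symm), ?_⟩
    simp only [List.getLast?_concat, Option.mem_some_iff, List.head?_reverse, hw]
    rintro _ rfl _ rfl
    exact haw
  · rw [← h.head?_eq]
    cases s <;> rfl
  · rw [hsplit, List.getLast?_append_of_ne_nil _ (by simpa using ht), List.getLast?_reverse, hb]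

theorem rotate_head (h : G.IsHamPath u w (s ++ a :: b :: t)) (hub : G.Adj u b) :
    G.IsHamPath a w (a :: s.reverse ++ b :: t) := by
  have h' := h.reverse
  rw [show (s ++ a :: b :: t).reverse = t.reverse ++ b :: a :: s.reverse by simp] at h'
  simpa using (h'.rotate hub.symm rfl).reverse

theorem deleteEdges {r : List V} (h : G.IsHamPath x w (x :: r)) (hr : r.head? ≠ some y) :
    (G.deleteEdges {s(x, y)}).IsHamPath x w (x :: r) := by
  have hx := (List.nodup_cons.1 h.nodup).1
  have hc := List.isChain_cons.1 h.isChain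
  refine h.of_perm (List.Perm.refl _) (List.isChain_cons.2 ⟨fun b hb => ?_, ?_⟩) h.head?_eq
    h.getLast?_eq
  · have hbx : b ≠ x := fun hbx => hx (hbx ▸ List.mem_of_mem_head? hb)
    have hby : b ≠ y := fun hby => hr (hby ▸ hb)
    exact ((hc.1 b hb).symm.deleteEdges_of_ne hbx hby).symm
  · exact isChain_deleteEdges_of_notMem hc.2 hx

theorem countP_adj_tail [DecidableRel G.Adj] (h : G.IsHamPath u w l) :
    l.tail.countP (G.Adj u ·) = deg G u := by
  obtain ⟨u', r, rfl⟩ := List.exists_cons_of_ne_nil (l := l) fun hl => by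
    simpa [hl] using h.mem u
  obtain rfl : u' = u := by simpa using h.head?_eq
  refine countP_adj_eq_deg (List.nodup_cons.1 h.nodup).2 fun v hv => ?_
  exact (List.mem_cons.1 (h.mem v)).resolve_left (G.ne_of_adj hv).symm

theorem countP_adj_dropLast [DecidableRel G.Adj] (h : G.IsHamPath u w l) :
    l.dropLast.countP (G.Adj w ·) = deg G w := by
  rw [← List.countP_reverse, ← List.tail_reverse, h.reverse.countP_adj_tail]

variable [Fintype V] [DecidableEq V]

theorem length_eq (h : G.IsHamPath u w l) : l.length = Fintype.card V := by
  rw [← List.toFinset_card_of_nodup h.nodup, ← Finset.card_univ]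
  congr 1
  ext v
  simp [h.mem v]

theorem ne (h : G.IsHamPath u w l) (hn : 2 ≤ Fintype.card V) : u ≠ w :=
  h.nodup.ne_of_head?_of_getLast? (h.length_eq ▸ hn) h.head?_eq h.getLast?_eq

theorem isHamiltonian (h : G.IsHamPath u w l) (hwu : G.Adj w u) (hn : 3 ≤ Fintype.card V) :
    G.IsHamiltonian := by
  intro _
  have hne : l ≠ [] := fun hl => by simpa [hl] using h.mem u
  have hu : l.head hne = u := by simpa [List.head?_eq_some_head hne] using h.head?_eq
  have hw : l.getLast hne = w := by
    simpa [List.getLast?_eq_some_getLast hne] using h.getLast?_eq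
  let p : G.Walk u w := (Walk.ofSupport l hne h.isChain).copy hu hw
  have hp : p.support = l := by simp [p]
  have hlen : (Walk.cons hwu p).length = Fintype.card V := by
    rw [Walk.length_cons, ← Walk.length_support, hp, h.length_eq]
  refine ⟨w, Walk.cons hwu p, ?_⟩
  rw [Walk.isHamiltonianCycle_iff_isCycle_and_length_eq,
    Walk.isCycle_iff_isPath_tail_and_le_length]
  refine ⟨⟨?_, hlen ▸ hn⟩, hlen⟩
  simpa [Walk.isPath_def, hp] using h.nodup

/-- Ore's crossing argument: of the `n - 1` consecutive pairs `(p, q)` of the path, `deg w` have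
`p ~ w` and `deg u` have `q ~ u`, so some pair has both, and rotating at it closes a cycle. -/
theorem isHamiltonian_of_card_le_deg_add (h : G.IsHamPath u w l) (hn : 3 ≤ Fintype.card V)
    (hdeg : Fintype.card V ≤ deg G u + deg G w) : G.IsHamiltonian := by
  classical
  set P := l.dropLast.zip l.tail
  have hP : P.length + 1 = Fintype.card V := by
    simp only [P, List.length_zip, List.length_dropLast, List.length_tail, h.length_eq]
    omega
  have hw : P.countP (fun p => G.Adj w p.1) = deg G w := by
    rw [← h.countP_adj_dropLast, ← List.map_fst_zip (l₁ := l.dropLast) (l₂ := l.tail) (by simp),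
      List.countP_map]
    rfl
  have hu : P.countP (fun p => G.Adj u p.2) = deg G u := by
    rw [← h.countP_adj_tail, ← List.map_snd_zip (l₁ := l.dropLast) (l₂ := l.tail) (by simp),
      List.countP_map]
    rfl
  obtain ⟨⟨a, b⟩, hab, hwa, hub⟩ :=
    List.exists_mem_of_length_lt_countP_add (l := P) (p := fun p => G.Adj w p.1)
      (q := fun p => G.Adj u p.2) (by omega)
  obtain ⟨s, t, rfl⟩ := List.exists_eq_append_cons_cons_of_mem_zip hab
  exact (h.rotate (G.adj_symm (by simpa using hwa)) rfl).isHamiltonian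
    (G.adj_symm (by simpa using hub)) hn

end IsHamPath

section Hamiltonian

variable [Fintype V] [DecidableEq V]

theorem IsHamiltonian.exists_isHamPath (hG : G.IsHamiltonian) (hn : 3 ≤ Fintype.card V) (x : V) :
    ∃ w l, G.IsHamPath x w l ∧ G.Adj w x := by
  have : Nontrivial V := Fintype.one_lt_card_iff_nontrivial.1 (by omega)
  obtain ⟨p, hp⟩ := hG.exists_isHamiltonianCycle x
  cases p with
  | nil => exact absurd hp.isCycle Walk.not_isCycle_nil
  | @cons _ w _ hxw q =>
    have hq : q.IsPath := ((Walk.cons_isCycle_iff q hxw).1 hp.isCycle).1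
    refine ⟨w, q.reverse.support, ⟨q.reverse.isChain_adj_support, ?_, ?_, hq.reverse.support_nodup,
      fun v => ?_⟩, hxw.symm⟩
    · rw [← q.reverse.cons_tail_support]
      rfl
    · rw [List.getLast?_eq_some_getLast (Walk.support_ne_nil _), Walk.getLast_support]
    · rw [Walk.support_reverse, List.mem_reverse]
      rcases List.mem_cons.1 (Walk.support_cons hxw q ▸ hp.mem_support v) with rfl | hv
      · exact q.end_mem_support
      · exact hv

theorem IsHamiltonian.isHamiltonian_deleteEdges_or_isHamPath (hG : G.IsHamiltonian)
    (hn : 3 ≤ Fintype.card V) (x y : V) :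
    (G.deleteEdges {s(x, y)}).IsHamiltonian ∨ ∃ l, (G.deleteEdges {s(x, y)}).IsHamPath x y l := by
  obtain ⟨w, l, hl, hwx⟩ := hG.exists_isHamPath hn x
  -- The cycle `x b ⋯ w x` avoids the edge `xy` unless `y = w` or `y = b`.
  obtain ⟨b, r, rfl⟩ := List.exists_eq_cons_cons (by rw [hl.length_eq]; omega) hl.head?_eq
  have hbw : b ≠ w := (List.nodup_cons.1 hl.nodup).2.ne_of_head?_of_getLast?
    (by have := hl.length_eq; simp at this ⊢; omega) rfl (by simpa using hl.getLast?_eq)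
  by_cases hwy : w = y
  · subst hwy
    exact Or.inr ⟨_, hl.deleteEdges (by simpa using hbw)⟩
  by_cases hby : b = y
  · subst hby
    refine Or.inr ⟨_, (hl.rotate (s := []) hwx.symm rfl).deleteEdges ?_⟩
    rw [List.head?_reverse, ← List.getLast?_cons_cons (a := x), hl.getLast?_eq]
    simpa using hbw.symm
  · exact Or.inl ((hl.deleteEdges (by simpa using hby)).isHamiltonian
      (hwx.deleteEdges_of_ne hwx.ne hwy) hn)

theorem isHamiltonian_of_forall_adj (hn : 3 ≤ Fintype.card V) (hG : ∀ u v, u ≠ v → G.Adj u v) :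
    G.IsHamiltonian := by
  set l := (Finset.univ : Finset V).toList
  have hne : l ≠ [] := List.ne_nil_of_length_pos (by simp [l]; omega)
  have hl : G.IsHamPath (l.head hne) (l.getLast hne) l :=
    ⟨(List.Pairwise.isChain (Finset.nodup_toList _)).imp fun u v => hG u v,
      List.head?_eq_some_head hne, List.getLast?_eq_some_getLast hne, Finset.nodup_toList _,
      by simp [l]⟩
  exact hl.isHamiltonian (hG _ _ (hl.ne (by omega)).symm) hn

end Hamiltonian

section Ore

variable [Fintype V]

def OreCondition (G : SimpleGraph V) : Prop :=
  ∀ u v : V, u ≠ v → ¬G.Adj u v → Fintype.card V ≤ deg G u + deg G v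

/-- The graphs `H₂ ∨ (K_s + K_t)` with `s ∈ {1, 2}`, where `H₂` is the graph induced on `{a, b}`. -/
def IsPairJoinTwoCliques [DecidableEq V] (G : SimpleGraph V) : Prop :=
  ∃ (a b : V) (S T : Finset V),
    a ≠ b ∧ a ∉ S ∧ a ∉ T ∧ b ∉ S ∧ b ∉ T ∧ Disjoint S T ∧
    insert a (insert b (S ∪ T)) = (Finset.univ : Finset V) ∧
    (S.card = 1 ∨ S.card = 2) ∧ 1 ≤ T.card ∧ S.card + T.card = Fintype.card V - 2 ∧
    (∀ u ∈ S, ∀ v ∈ S, u ≠ v → G.Adj u v) ∧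
    (∀ u ∈ T, ∀ v ∈ T, u ≠ v → G.Adj u v) ∧
    (∀ u ∈ S, ∀ v ∈ T, ¬G.Adj u v) ∧
    (∀ v ∈ S ∪ T, G.Adj a v ∧ G.Adj b v)

namespace OreCondition

theorem mono (hG : G.OreCondition) (hle : G ≤ G') : G'.OreCondition := fun u v huv hadj =>
  (hG u v huv fun h => hadj (hle h)).trans (add_le_add (deg_mono hle u) (deg_mono hle v))

variable [DecidableEq V]

theorem isHamiltonian (hG : G.OreCondition) (hn : 3 ≤ Fintype.card V) : G.IsHamiltonian := by
  induction G using WellFoundedGT.induction with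
  | _ G ih =>
  by_cases! hc : ∀ u v, u ≠ v → G.Adj u v
  · exact isHamiltonian_of_forall_adj hn hc
  obtain ⟨u, v, huv, hadj⟩ := hc
  have hlt := G.lt_sup_edge u v huv hadj
  rcases (ih _ hlt (hG.mono hlt.le)).isHamiltonian_deleteEdges_or_isHamPath hn u v with h | ⟨l, hl⟩
  · rwa [sup_edge_deleteEdges hadj] at h
  · rw [sup_edge_deleteEdges hadj] at hl
    exact hl.isHamiltonian_of_card_le_deg_add hn (hG u v huv hadj)

theorem adj_of_card_eq_three (hG : G.OreCondition) (h3 : Fintype.card V = 3) (huv : u ≠ v) :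
    G.Adj u v := by
  by_contra hadj
  have hu := deg_add_card_le (F := {v}) (by simpa using huv) (by simpa using hadj)
  have hv := deg_add_card_le (F := {u}) (by simpa using huv.symm)
    (by simpa using fun h => hadj h.symm)
  have := hG u v huv hadj
  simp only [Finset.card_singleton] at hu hv
  omega

theorem nonempty_iso_of_card_eq_three (hG : G.OreCondition) (h3 : Fintype.card V = 3) :
    Nonempty (G ≃g (⊤ : SimpleGraph (Fin 3))) := by
  obtain rfl : G = ⊤ := by
    ext u v
    exact ⟨G.ne_of_adj, hG.adj_of_card_eq_three h3⟩
  exact ⟨Iso.completeGraph (Fintype.equivFinOfCardEq h3)⟩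

theorem isPairJoinTwoCliques_of_separating_pair (hG : G.OreCondition) {S : Finset V}
    (hab : a ≠ b) (haS : a ∉ S) (hbS : b ∉ S) (hS : S.card = 1 ∨ S.card = 2)
    (hn : S.card + 3 ≤ Fintype.card V) (hSS : ∀ u ∈ S, ∀ v ∈ S, u ≠ v → G.Adj u v)
    (hSab : ∀ v ∈ S, G.Adj a v ∧ G.Adj b v)
    (hSN : ∀ u ∈ S, ∀ v, G.Adj u v → v = a ∨ v = b ∨ v ∈ S) : G.IsPairJoinTwoCliques := by
  set T := (insert a (insert b S))ᶜ
  have hT : ∀ v, v ∈ T ↔ v ≠ a ∧ v ≠ b ∧ v ∉ S := by simp [T]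
  have hcard : (insert a (insert b S)).card = S.card + 2 := by
    rw [Finset.card_insert_of_notMem (by simp [hab, haS]), Finset.card_insert_of_notMem hbS]
  have hTcard : T.card = Fintype.card V - (S.card + 2) := by rw [Finset.card_compl, hcard]
  obtain ⟨s₀, hs₀⟩ : S.Nonempty := Finset.card_pos.1 (by omega)
  have hdeg : deg G s₀ ≤ S.card + 1 := by
    have hsub : G.neighborSet s₀ ⊆ ↑((insert a (insert b S)).erase s₀) := fun v hv => by
      simp only [Finset.coe_erase, Finset.coe_insert, Set.mem_sdiff, Set.mem_insert_iff,
        Finset.mem_coe, Set.mem_singleton_iff]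
      exact ⟨hSN s₀ hs₀ v hv, (G.ne_of_adj hv).symm⟩
    have := Set.ncard_le_ncard hsub (Set.toFinite _)
    rwa [Set.ncard_coe_finset, Finset.card_erase_of_mem (by simp [hs₀]), hcard] at this
  have hTS : ∀ v ∈ T, ∀ u ∈ S, ¬G.Adj u v := fun v hv u hu huv => by
    have := (hT v).1 hv
    rcases hSN u hu v huv with h | h | h <;> tauto
  -- Ore's condition for the non-adjacent pair `v, s₀` leaves `v` no room to miss anything
  -- outside `S`.
  have hTadj : ∀ v ∈ T, ∀ z, z ≠ v → z ∉ S → G.Adj v z := fun v hv z hzv hzS => by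
    have hvs₀ : v ≠ s₀ := fun h => ((hT v).1 hv).2.2 (h ▸ hs₀)
    have := hG v s₀ hvs₀ fun h => hTS v hv s₀ hs₀ h.symm
    exact adj_of_card_le_deg_add ((hT v).1 hv).2.2 (fun f hf h => hTS v hv f hf h.symm)
      (by omega) hzv hzS
  refine ⟨a, b, S, T, hab, haS, by simp [hT], hbS, by simp [hT], ?_, ?_, hS, by omega, by omega,
    hSS, fun u hu v hv huv => hTadj u hu v huv.symm ((hT v).1 hv).2.2,
    fun u hu v hv => hTS v hv u hu, fun v hv => ?_⟩
  · exact Finset.disjoint_left.2 fun v hv hvT => ((hT v).1 hvT).2.2 hv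
  · ext v
    simp only [Finset.mem_insert, Finset.mem_union, hT, Finset.mem_univ, iff_true]
    tauto
  · rcases Finset.mem_union.1 hv with hv | hv
    · exact hSab v hv
    · have := (hT v).1 hv
      exact ⟨(hTadj v hv a (Ne.symm this.1) haS).symm, (hTadj v hv b (Ne.symm this.2.1) hbS).symm⟩

section DeleteEdge

variable (hG : G.OreCondition) (hH : ¬(G.deleteEdges {s(x, y)}).IsHamiltonian)
  (hn : 3 ≤ Fintype.card V)
include hG hH hn

theorem eq_or_eq_of_isHamPath (h : (G.deleteEdges {s(x, y)}).IsHamPath u w l) (hwx : w ≠ x)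
    (hwy : w ≠ y) : u = x ∨ u = y := by
  by_contra! hu
  have hwu : ¬G.Adj w u := fun hwu =>
    hH (h.isHamiltonian (hwu.symm.deleteEdges_of_ne hu.1 hu.2).symm hn)
  refine hH (h.isHamiltonian_of_card_le_deg_add hn ?_)
  rw [deg_deleteEdges_of_ne hu.1 hu.2, deg_deleteEdges_of_ne hwx hwy]
  exact hG u w (h.ne (by omega)) fun h => hwu h.symm

theorem exists_pred_eq_or_eq (h : (G.deleteEdges {s(x, y)}).IsHamPath x w l) (hwx : w ≠ x)
    (hwy : w ≠ y) {z : V} (hxz : G.Adj x z) (hzy : z ≠ y) :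
    ∃ p s t, l = s ++ p :: z :: t ∧ (p = x ∨ p = y) := by
  obtain ⟨s', t, rfl⟩ := List.append_of_mem (h.mem z)
  obtain ⟨s, p, rfl⟩ := s'.eq_nil_or_concat.resolve_left fun hs => G.ne_of_adj hxz <| by
    simpa [hs] using h.head?_eq.symm
  rw [List.concat_eq_append, List.append_assoc, List.singleton_append] at h ⊢
  refine ⟨p, s, t, rfl, hG.eq_or_eq_of_isHamPath hH hn (h.rotate_head ?_) hwx hwy⟩
  exact (hxz.symm.deleteEdges_of_ne (G.ne_of_adj hxz).symm hzy).symm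

/-- If `y` has a neighbour `z₀ ∉ {x, b}`, rotating at `z₀` gives a path `x ⋯ z₀ y b ⋯` ending
outside `{x, y}`, on which every other neighbour of `x` must follow `x` or `y`. -/
theorem adj_eq_or_adj_eq_of_isHamPath {m : List V}
    (h : (G.deleteEdges {s(x, y)}).IsHamPath x y (x :: a :: m ++ [b, y])) :
    (∀ v, G.Adj y v → v = x ∨ v = b) ∨ ∀ z, G.Adj x z → z = y ∨ z = a ∨ z = b := by
  refine or_iff_not_imp_left.2 fun hy z hxz => ?_
  push Not at hy
  obtain ⟨z₀, hyz₀, hz₀x, hz₀b⟩ := hy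
  have hz₀ : z₀ ∈ a :: m := by
    have := h.mem z₀
    simp only [List.cons_append, List.mem_cons, List.mem_append, List.not_mem_nil,
      or_false] at this ⊢
    have := G.ne_of_adj hyz₀
    tauto
  obtain ⟨s, r, hsr⟩ := List.append_of_mem hz₀
  have hl : x :: a :: m ++ [b, y] = (x :: s) ++ z₀ :: (r ++ [b, y]) := by
    rw [show x :: a :: m ++ [b, y] = x :: (a :: m ++ [b, y]) from rfl, hsr]
    simp
  have hnd := h.nodup
  rw [hl] at h hnd
  obtain ⟨c, hc⟩ : ∃ c, (r ++ [b, y]).head? = some c := ⟨_, List.head?_eq_some_head (by simp)⟩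
  have h' := h.rotate (hyz₀.symm.deleteEdges_of_ne hz₀x (G.ne_of_adj hyz₀).symm) hc
  have hcr : c ∈ r ++ [b] := by cases r <;> simp_all
  simp only [List.nodup_append, List.nodup_cons, List.mem_append, List.mem_cons] at hnd
  have hcx : c ≠ x := by grind
  have hcy : c ≠ y := by grind
  rw [show (r ++ [b, y]).reverse = y :: b :: r.reverse by simp] at h'
  by_cases hzy : z = y
  · exact Or.inl hzy
  obtain ⟨p, s', t', hst, hp | hp⟩ := hG.exists_pred_eq_or_eq hH hn h' hcx hcy hxz hzy <;>
    subst p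
  · obtain ⟨t'', ht''⟩ : ∃ t'', x :: s ++ z₀ :: y :: b :: r.reverse = [] ++ x :: a :: t'' := by
      cases s <;> exact ⟨_, by rw [(List.cons.inj hsr).1]; rfl⟩
    exact Or.inr (Or.inl (h'.nodup.eq_of_append_cons_cons hst ht''))
  · exact Or.inr (Or.inr (h'.nodup.eq_of_append_cons_cons hst (s₂ := x :: s ++ [z₀])
      (t₂ := r.reverse) (by simp)))

end DeleteEdge

theorem isPairJoinTwoCliques_of_neighbors_eq_pair (hG : G.OreCondition)
    (hn : 4 ≤ Fintype.card V) (hab : a ≠ b) (hya : G.Adj y a) (hyb : G.Adj y b)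
    (hN : ∀ v, G.Adj y v → v = a ∨ v = b) : G.IsPairJoinTwoCliques := by
  refine hG.isPairJoinTwoCliques_of_separating_pair (S := {y}) hab (by simp [hya.ne'])
    (by simp [hyb.ne']) (Or.inl (Finset.card_singleton _)) (by simp; omega) (by simp)
    (by simp [hya.symm, hyb.symm]) ?_
  simp only [Finset.mem_singleton, forall_eq]
  exact fun v hv => (hN v hv).imp_right Or.inl

theorem isPairJoinTwoCliques_of_neighbors_eq_triple (hG : G.OreCondition)
    (hn : 5 ≤ Fintype.card V) (hab : a ≠ b) (hxy : G.Adj x y) (hxa : G.Adj x a)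
    (hxb : G.Adj x b) (hya : G.Adj y a) (hyb : G.Adj y b)
    (hNx : ∀ v, G.Adj x v → v = y ∨ v = a ∨ v = b) (hNy : ∀ v, G.Adj y v → v = x ∨ v = a ∨ v = b) :
    G.IsPairJoinTwoCliques := by
  refine hG.isPairJoinTwoCliques_of_separating_pair (S := {x, y}) hab
    (by simp [hxa.ne', hya.ne']) (by simp [hxb.ne', hyb.ne']) (Or.inr (Finset.card_pair hxy.ne))
    (by simp [Finset.card_pair hxy.ne]; omega) ?_ ?_ ?_ <;>
    simp only [Finset.mem_insert, Finset.mem_singleton]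
  · rintro u (rfl | rfl) v (rfl | rfl) huv
    exacts [absurd rfl huv, hxy, hxy.symm, absurd rfl huv]
  · rintro v (rfl | rfl)
    exacts [⟨hxa.symm, hxb.symm⟩, ⟨hya.symm, hyb.symm⟩]
  · rintro u (rfl | rfl) v huv
    · rcases hNx v huv with h | h | h <;> simp [h]
    · rcases hNy v huv with h | h | h <;> simp [h]

theorem isPairJoinTwoCliques_of_not_isHamiltonian_deleteEdges (hG : G.OreCondition)
    (hn : 4 ≤ Fintype.card V) (hxy : G.Adj x y)
    (hH : ¬(G.deleteEdges {s(x, y)}).IsHamiltonian) : G.IsPairJoinTwoCliques := by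
  have hn3 : 3 ≤ Fintype.card V := by omega
  obtain ⟨l, hl⟩ :=
    ((hG.isHamiltonian hn3).isHamiltonian_deleteEdges_or_isHamPath hn3 x y).resolve_left hH
  obtain ⟨a, b, m, rfl⟩ :=
    List.exists_eq_cons_cons_append_pair (hl.length_eq ▸ hn) hl.head?_eq hl.getLast?_eq
  have hlen := hl.length_eq
  have hnd := hl.nodup
  simp only [List.length_append, List.length_cons, List.length_nil] at hlen
  simp only [List.cons_append, List.nodup_cons, List.mem_cons, List.mem_append] at hnd
  have hxa : G.Adj x a := G.deleteEdges_le _ (List.isChain_cons_cons.1 hl.isChain).1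
  have hyb : G.Adj y b := G.adj_symm <| G.deleteEdges_le _ <|
    (List.isChain_cons_cons.1 (List.isChain_append.1 hl.isChain).2.1).1
  have hswap : G.deleteEdges {s(y, x)} = G.deleteEdges {s(x, y)} := by rw [Sym2.eq_swap]
  have hNx := hG.adj_eq_or_adj_eq_of_isHamPath hH hn3 hl
  have hNy := hG.adj_eq_or_adj_eq_of_isHamPath (hswap ▸ hH) hn3 (x := y) (y := x) (a := b)
    (b := a) (m := m.reverse) (by rw [hswap]; simpa using hl.reverse)
  by_cases h1 : ∀ v, G.Adj y v → v = x ∨ v = b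
  · exact hG.isPairJoinTwoCliques_of_neighbors_eq_pair hn (by tauto) hxy.symm hyb h1
  by_cases h2 : ∀ v, G.Adj x v → v = y ∨ v = a
  · exact hG.isPairJoinTwoCliques_of_neighbors_eq_pair hn (by tauto) hxy hxa h2
  have hx := hNx.resolve_left h1
  have hy := hNy.resolve_left h2
  push Not at h1 h2
  obtain ⟨v, hyv, hvx, hvb⟩ := h1
  obtain ⟨w, hxw, hwy, hwa⟩ := h2
  have hya : G.Adj y a := by simpa [(by simpa [hvx, hvb] using hy v hyv : v = a)] using hyv
  have hxb : G.Adj x b := by simpa [(by simpa [hwy, hwa] using hx w hxw : w = b)] using hxw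
  have hm : m ≠ [] := by
    rintro rfl
    have h4 := hl.rotate (s := [x]) (hya.symm.deleteEdges_of_ne (by tauto) (by tauto)) rfl
    exact hH (h4.isHamiltonian (hxb.symm.deleteEdges_of_ne (by tauto) hyb.ne') hn3)
  refine hG.isPairJoinTwoCliques_of_neighbors_eq_triple ?_ (by tauto) hxy hxa hxb hya hyb hx
    fun v hv => (hy v hv).imp_right Or.symm
  have := List.length_pos_of_ne_nil hm
  omega

end OreCondition

end Ore

end SimpleGraph

/-- Any graph on `n ≥ 3` vertices satisfying Ore's condition is
1-edge-fault hamiltonian, unless it is `K₃` or of the form `H₂ ∨ (K_s + K_t)` with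
`s ∈ {1, 2}`. -/
theorem statement_1 {V : Type*} [Fintype V] [DecidableEq V] (G : SimpleGraph V)
    (n : ℕ) (hn : n = Fintype.card V) (hn3 : 3 ≤ n)
    (hOre : ∀ u v : V, u ≠ v → ¬G.Adj u v → n ≤ deg G u + deg G v) :
    (∀ u v : V, G.Adj u v → (G.deleteEdges {s(u, v)}).IsHamiltonian) ∨
    Nonempty (G ≃g (⊤ : SimpleGraph (Fin 3))) ∨
    (∃ (a b : V) (S T : Finset V),
      a ≠ b ∧ a ∉ S ∧ a ∉ T ∧ b ∉ S ∧ b ∉ T ∧ Disjoint S T ∧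
      insert a (insert b (S ∪ T)) = (Finset.univ : Finset V) ∧
      (S.card = 1 ∨ S.card = 2) ∧ 1 ≤ T.card ∧ S.card + T.card = n - 2 ∧
      (∀ u ∈ S, ∀ v ∈ S, u ≠ v → G.Adj u v) ∧
      (∀ u ∈ T, ∀ v ∈ T, u ≠ v → G.Adj u v) ∧
      (∀ u ∈ S, ∀ v ∈ T, ¬G.Adj u v) ∧
      (∀ v ∈ S ∪ T, G.Adj a v ∧ G.Adj b v)) := by
  subst hn
  have hG : G.OreCondition := hOre
  rcases hn3.eq_or_lt with h3 | h4
  · exact Or.inr (Or.inl (hG.nonempty_iso_of_card_eq_three h3.symm))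
  by_cases hall : ∀ u v : V, G.Adj u v → (G.deleteEdges {s(u, v)}).IsHamiltonian
  · exact Or.inl hall
  push Not at hall
  obtain ⟨x, y, hxy, hH⟩ := hall
  exact Or.inr (Or.inr (hG.isPairJoinTwoCliques_of_not_isHamiltonian_deleteEdges h4 hxy hH))
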